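/- Let X, Y, Z be finite types of fixed cardinalities d_X, d_Y, d_Z ≥ 1. For every real q > 1, the supremum of I_q(X:Y|Z) over all probability distributions p on X × Y × Z satisfying p(x,y,z)·p_Z(z) = p_{XZ}(x,z)·p_{YZ}(y,z) for all x, y, z equals the supremum of I_q(X:Y) over all probability distributions on X × Y of product form p(x,y) = p_X(x)·p_Y(y); both suprema equal f(q,d_X,d_Y) and both are attained. -/

import Mathlib

open Finset

/-- Tsallis entropy of order `q` of a distribution `p` on a finite type,
with the sum restricted to the support of `p`. -/
noncomputable def tsallisEnt {α : Type*} [Fintype α] (q : ℝ) (p : α → ℝ) : ℝ :=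
  (1 / (1 - q)) * ((∑ x ∈ univ.filter (fun x => 0 < p x), p x ^ q) - 1)

/-- The bound `f(q,a,b) = (1/(q−1))·(1−a^{1−q})·(1−b^{1−q})`. -/
noncomputable def fBound (q : ℝ) (a b : ℕ) : ℝ :=
  (1 / (q - 1)) * (1 - (a : ℝ) ^ (1 - q)) * (1 - (b : ℝ) ^ (1 - q))

/-!
Write `c_z = p_Z(z)`, `a_z = ∑ₓ p_{XZ}(x, z)^q`, `b_z = ∑_y p_{YZ}(y, z)^q` and
`s_z = ∑_{x,y} p(x, y, z)^q`. Then `(q - 1) I_q(X:Y|Z) = ∑_z (c_z^q + s_z - a_z - b_z)`, and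
conditional independence factors `c_z^q s_z = a_z b_z`, so each summand is
`(c_z^q - a_z)(c_z^q - b_z) / c_z^q`. For `q ≥ 1`, superadditivity of `t ↦ t^q` and the power
mean inequality give `d_X^{1-q} c_z^q ≤ a_z ≤ c_z^q` (likewise for `b_z`), so the summand is at
most `c_z^q (1 - d_X^{1-q})(1 - d_Y^{1-q})`, and `∑_z c_z^q ≤ 1`. Equality holds when `Z` is
constant and `X`, `Y` are independent and uniform. The unconditional case is a single slice.
-/

open Real

lemma sum_rpow_le_rpow_sum {ι : Type*} (s : Finset ι) {f : ι → ℝ} {q : ℝ} (hq : 1 ≤ q)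
    (hf : ∀ i ∈ s, 0 ≤ f i) : ∑ i ∈ s, f i ^ q ≤ (∑ i ∈ s, f i) ^ q := by
  induction s using Finset.cons_induction with
  | empty => simp [zero_rpow (by positivity : q ≠ 0)]
  | cons i s hi ih =>
    rw [sum_cons, sum_cons]
    have hfs : ∀ j ∈ s, 0 ≤ f j := fun j hj => hf j (mem_cons_of_mem hj)
    calc f i ^ q + ∑ j ∈ s, f j ^ q ≤ f i ^ q + (∑ j ∈ s, f j) ^ q := by gcongr; exact ih hfs
      _ ≤ (f i + ∑ j ∈ s, f j) ^ q :=
        add_rpow_le_rpow_add (hf i (mem_cons_self i s)) (sum_nonneg hfs) hq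

lemma card_rpow_mul_rpow_sum_le_sum_rpow {ι : Type*} {s : Finset ι} (hs : s.Nonempty)
    {f : ι → ℝ} {q : ℝ} (hq : 1 ≤ q) (hf : ∀ i ∈ s, 0 ≤ f i) :
    (#s : ℝ) ^ (1 - q) * (∑ i ∈ s, f i) ^ q ≤ ∑ i ∈ s, f i ^ q := by
  have hcard : (0 : ℝ) < #s := by exact_mod_cast hs.card_pos
  calc (#s : ℝ) ^ (1 - q) * (∑ i ∈ s, f i) ^ q
      ≤ (#s : ℝ) ^ (1 - q) * ((#s : ℝ) ^ (q - 1) * ∑ i ∈ s, f i ^ q) := by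
        gcongr; exact rpow_sum_le_const_mul_sum_rpow_of_nonneg s hq hf
    _ = ∑ i ∈ s, f i ^ q := by
        rw [← mul_assoc, ← rpow_add hcard, sub_add_sub_cancel', sub_self, rpow_zero, one_mul]

lemma tsallisEnt_eq_of_nonneg {α : Type*} [Fintype α] {q : ℝ} (hq : q ≠ 0) {p : α → ℝ}
    (hp : ∀ x, 0 ≤ p x) : tsallisEnt q p = (∑ x, p x ^ q - 1) / (1 - q) := by
  rw [tsallisEnt, one_div_mul_eq_div]
  congr 2
  refine sum_subset (filter_subset _ _) fun x _ hx => ?_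
  rw [((hp x).eq_or_lt.resolve_right (by simpa using hx)).symm, zero_rpow hq]

lemma fBound_eq (q : ℝ) (a b : ℕ) :
    fBound q a b = (1 - (a : ℝ) ^ (1 - q)) * (1 - (b : ℝ) ^ (1 - q)) / (q - 1) := by
  rw [fBound]; ring

lemma sum_prod_prod_eq_sum_sum_sum {X Y Z M : Type*} [Fintype X] [Fintype Y] [Fintype Z]
    [AddCommMonoid M] (f : X × Y × Z → M) : ∑ t, f t = ∑ z, ∑ x, ∑ y, f (x, y, z) := by
  simp only [Fintype.sum_prod_type]
  exact (sum_congr rfl fun x _ => sum_comm).trans sum_comm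

section

variable {X Y Z : Type*} [Fintype X] [Fintype Y]

noncomputable def tsallisMutualInfo (q : ℝ) (p : X × Y → ℝ) : ℝ :=
  tsallisEnt q (fun x => ∑ y, p (x, y)) + tsallisEnt q (fun y => ∑ x, p (x, y)) - tsallisEnt q p

noncomputable def tsallisCondMutualInfo [Fintype Z] (q : ℝ) (p : X × Y × Z → ℝ) : ℝ :=
  tsallisEnt q (fun w : X × Z => ∑ y, p (w.1, y, w.2))
    + tsallisEnt q (fun w : Y × Z => ∑ x, p (x, w.1, w.2))
    - tsallisEnt q (fun z => ∑ x, ∑ y, p (x, y, z)) - tsallisEnt q p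

/-- `(q - 1) I_q(X:Y)` when `r` is a probability distribution; it is homogeneous of degree `q`
in `r`, so it also measures the slices `p(·, ·, z)` of a distribution on `X × Y × Z`. -/
noncomputable def mutualInfoPowerSum (q : ℝ) (r : X × Y → ℝ) : ℝ :=
  (∑ x, ∑ y, r (x, y)) ^ q + ∑ x, ∑ y, r (x, y) ^ q
    - ∑ x, (∑ y, r (x, y)) ^ q - ∑ y, (∑ x, r (x, y)) ^ q

lemma rpow_sum_mul_sum_rpow_eq_of_indep {q : ℝ} {r : X × Y → ℝ} (hr : ∀ t, 0 ≤ r t)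
    (hind : ∀ x y, r (x, y) * ∑ x', ∑ y', r (x', y') = (∑ y', r (x, y')) * ∑ x', r (x', y)) :
    (∑ x, ∑ y, r (x, y)) ^ q * ∑ x, ∑ y, r (x, y) ^ q
      = (∑ x, (∑ y, r (x, y)) ^ q) * ∑ y, (∑ x, r (x, y)) ^ q := by
  rw [sum_mul_sum, mul_sum]
  refine sum_congr rfl fun x _ => ?_
  rw [mul_sum]
  refine sum_congr rfl fun y _ => ?_
  rw [← mul_rpow (sum_nonneg fun x _ => sum_nonneg fun y _ => hr _) (hr _), mul_comm, hind,
    mul_rpow (sum_nonneg fun _ _ => hr _) (sum_nonneg fun _ _ => hr _)]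

theorem mutualInfoPowerSum_le [Nonempty X] [Nonempty Y] {q : ℝ} (hq : 1 ≤ q)
    {r : X × Y → ℝ} (hr : ∀ t, 0 ≤ r t)
    (hind : ∀ x y, r (x, y) * ∑ x', ∑ y', r (x', y') = (∑ y', r (x, y')) * ∑ x', r (x', y)) :
    mutualInfoPowerSum q r ≤ (∑ x, ∑ y, r (x, y)) ^ q
      * ((1 - (Fintype.card X : ℝ) ^ (1 - q)) * (1 - (Fintype.card Y : ℝ) ^ (1 - q))) := by
  unfold mutualInfoPowerSum
  set c := ∑ x, ∑ y, r (x, y)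
  set A := fun x => ∑ y, r (x, y)
  set B := fun y => ∑ x, r (x, y)
  have hA0 : ∀ x ∈ univ, 0 ≤ A x := fun x _ => sum_nonneg fun y _ => hr _
  have hB0 : ∀ y ∈ univ, 0 ≤ B y := fun y _ => sum_nonneg fun x _ => hr _
  have hB : ∑ y, B y = c := sum_comm
  have ha := sum_rpow_le_rpow_sum univ hq hA0
  have hα := card_rpow_mul_rpow_sum_le_sum_rpow univ_nonempty hq hA0
  have hb := sum_rpow_le_rpow_sum univ hq hB0
  have hβ := card_rpow_mul_rpow_sum_le_sum_rpow univ_nonempty hq hB0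
  rw [hB] at hb hβ
  have hs : ∑ x, ∑ y, r (x, y) ^ q ≤ c ^ q :=
    (sum_le_sum fun x _ => sum_rpow_le_rpow_sum univ hq fun y _ => hr _).trans ha
  have hkey : c ^ q * ∑ x, ∑ y, r (x, y) ^ q = (∑ x, A x ^ q) * ∑ y, B y ^ q :=
    rpow_sum_mul_sum_rpow_eq_of_indep hr hind
  rw [card_univ] at hα hβ
  have ha0 : 0 ≤ ∑ x, A x ^ q := sum_nonneg fun x hx => rpow_nonneg (hA0 x hx) q
  have hb0 : 0 ≤ ∑ y, B y ^ q := sum_nonneg fun y hy => rpow_nonneg (hB0 y hy) q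
  rcases (rpow_nonneg (sum_nonneg hA0) q).eq_or_lt with hc | hc
  · rw [← hc] at hs ⊢
    linarith
  refine le_of_mul_le_mul_left ?_ hc
  calc c ^ q * (c ^ q + ∑ x, ∑ y, r (x, y) ^ q - ∑ x, A x ^ q - ∑ y, B y ^ q)
      = (c ^ q - ∑ x, A x ^ q) * (c ^ q - ∑ y, B y ^ q) := by linear_combination hkey
    _ ≤ (c ^ q * (1 - (Fintype.card X : ℝ) ^ (1 - q)))
          * (c ^ q * (1 - (Fintype.card Y : ℝ) ^ (1 - q))) :=
        mul_le_mul (by linarith) (by linarith) (by linarith) (by linarith)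
    _ = _ := by ring

theorem mutualInfoPowerSum_uniform [Nonempty X] [Nonempty Y] (q : ℝ) {c : ℝ} (hc : 0 ≤ c) :
    mutualInfoPowerSum q (fun _ : X × Y => c / (Fintype.card X * Fintype.card Y)) = c ^ q
      * ((1 - (Fintype.card X : ℝ) ^ (1 - q)) * (1 - (Fintype.card Y : ℝ) ^ (1 - q))) := by
  have hX : (0 : ℝ) < Fintype.card X := by exact_mod_cast Fintype.card_pos
  have hY : (0 : ℝ) < Fintype.card Y := by exact_mod_cast Fintype.card_pos
  simp only [mutualInfoPowerSum, sum_const, card_univ, nsmul_eq_mul]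
  set dX : ℝ := (Fintype.card X : ℝ)
  set dY : ℝ := (Fintype.card Y : ℝ)
  have hpow : ∀ d : ℝ, 0 < d → d * (c / d) ^ q = c ^ q * d ^ (1 - q) := fun d hd => by
    rw [div_rpow hc hd.le, rpow_sub hd, rpow_one]; field_simp
  rw [show dX * (dY * (c / (dX * dY))) = c by field_simp,
    show dY * (c / (dX * dY)) = c / dX by field_simp,
    show dX * (c / (dX * dY)) = c / dY by field_simp,
    hpow _ hX, hpow _ hY, ← mul_assoc dX, hpow _ (mul_pos hX hY), mul_rpow hX.le hY.le]
  ring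

theorem tsallisMutualInfo_eq {q : ℝ} (hq : q ≠ 0) {p : X × Y → ℝ} (hp : ∀ t, 0 ≤ p t)
    (hp1 : ∑ t, p t = 1) : tsallisMutualInfo q p = mutualInfoPowerSum q p / (q - 1) := by
  rw [Fintype.sum_prod_type] at hp1
  rw [tsallisMutualInfo, mutualInfoPowerSum, tsallisEnt_eq_of_nonneg hq hp,
    tsallisEnt_eq_of_nonneg hq fun x => sum_nonneg fun y _ => hp _,
    tsallisEnt_eq_of_nonneg hq fun y => sum_nonneg fun x _ => hp _,
    Fintype.sum_prod_type, hp1, one_rpow, show 1 - q = -(q - 1) by ring]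
  simp only [div_neg]
  ring

theorem tsallisCondMutualInfo_eq [Fintype Z] {q : ℝ} (hq : q ≠ 0) {p : X × Y × Z → ℝ}
    (hp : ∀ t, 0 ≤ p t) :
    tsallisCondMutualInfo q p
      = (∑ z, mutualInfoPowerSum q (fun w : X × Y => p (w.1, w.2, z))) / (q - 1) := by
  rw [tsallisCondMutualInfo, tsallisEnt_eq_of_nonneg hq hp,
    tsallisEnt_eq_of_nonneg hq fun w => sum_nonneg fun y _ => hp _,
    tsallisEnt_eq_of_nonneg hq fun w => sum_nonneg fun x _ => hp _,
    tsallisEnt_eq_of_nonneg hq fun z => sum_nonneg fun x _ => sum_nonneg fun y _ => hp _,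
    Fintype.sum_prod_type, Fintype.sum_prod_type, sum_comm (s := (univ : Finset X)),
    sum_comm (s := (univ : Finset Y)), sum_prod_prod_eq_sum_sum_sum]
  simp only [mutualInfoPowerSum, sum_add_distrib, sum_sub_distrib, show 1 - q = -(q - 1) by ring,
    div_neg]
  ring

theorem tsallisMutualInfo_le [Nonempty X] [Nonempty Y] {q : ℝ} (hq : 1 < q) {p : X × Y → ℝ}
    (hp : ∀ t, 0 ≤ p t) (hp1 : ∑ t, p t = 1)
    (hprod : ∀ x y, p (x, y) = (∑ y', p (x, y')) * ∑ x', p (x', y)) :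
    tsallisMutualInfo q p ≤ fBound q (Fintype.card X) (Fintype.card Y) := by
  have hp1' : ∑ x, ∑ y, p (x, y) = 1 := by rwa [Fintype.sum_prod_type] at hp1
  have h := mutualInfoPowerSum_le hq.le hp fun x y => by rw [hp1', mul_one, hprod]
  rw [hp1', one_rpow, one_mul] at h
  rw [tsallisMutualInfo_eq (by positivity) hp hp1, fBound_eq]
  exact div_le_div_of_nonneg_right h (sub_nonneg.2 hq.le)

theorem tsallisCondMutualInfo_le [Nonempty X] [Nonempty Y] [Fintype Z] {q : ℝ} (hq : 1 < q)
    {p : X × Y × Z → ℝ} (hp : ∀ t, 0 ≤ p t) (hp1 : ∑ t, p t = 1)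
    (hind : ∀ x y z, p (x, y, z) * (∑ x', ∑ y', p (x', y', z))
      = (∑ y', p (x, y', z)) * (∑ x', p (x', y, z))) :
    tsallisCondMutualInfo q p ≤ fBound q (Fintype.card X) (Fintype.card Y) := by
  set K := (1 - (Fintype.card X : ℝ) ^ (1 - q)) * (1 - (Fintype.card Y : ℝ) ^ (1 - q))
  have hK : 0 ≤ K := by
    have hle : ∀ d : ℕ, 0 < d → (d : ℝ) ^ (1 - q) ≤ 1 := fun d hd =>
      rpow_le_one_of_one_le_of_nonpos (by exact_mod_cast hd) (by linarith)
    exact mul_nonneg (sub_nonneg.2 (hle _ Fintype.card_pos)) (sub_nonneg.2 (hle _ Fintype.card_pos))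
  have hc : ∀ z ∈ univ, 0 ≤ ∑ x, ∑ y, p (x, y, z) := fun z _ =>
    sum_nonneg fun x _ => sum_nonneg fun y _ => hp _
  have hcq : ∑ z, (∑ x, ∑ y, p (x, y, z)) ^ q ≤ 1 := by
    simpa [← sum_prod_prod_eq_sum_sum_sum, hp1] using sum_rpow_le_rpow_sum univ hq.le hc
  rw [tsallisCondMutualInfo_eq (by positivity) hp, fBound_eq]
  refine div_le_div_of_nonneg_right ?_ (sub_nonneg.2 hq.le)
  calc ∑ z, mutualInfoPowerSum q (fun w : X × Y => p (w.1, w.2, z))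
      ≤ ∑ z, (∑ x, ∑ y, p (x, y, z)) ^ q * K :=
        sum_le_sum fun z _ => mutualInfoPowerSum_le hq.le (fun _ => hp _) fun x y => hind x y z
    _ = (∑ z, (∑ x, ∑ y, p (x, y, z)) ^ q) * K := (sum_mul ..).symm
    _ ≤ K := mul_le_of_le_one_left hK hcq

lemma sum_uniform [Nonempty X] [Nonempty Y] :
    ∑ _t : X × Y, 1 / ((Fintype.card X : ℝ) * Fintype.card Y) = 1 := by
  have hX : (0 : ℝ) < Fintype.card X := by exact_mod_cast Fintype.card_pos
  have hY : (0 : ℝ) < Fintype.card Y := by exact_mod_cast Fintype.card_pos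
  simp only [sum_const, card_univ, Fintype.card_prod, nsmul_eq_mul, Nat.cast_mul]
  field_simp

lemma uniform_eq_sum_mul_sum [Nonempty X] [Nonempty Y] :
    1 / ((Fintype.card X : ℝ) * Fintype.card Y)
      = (∑ _y : Y, 1 / ((Fintype.card X : ℝ) * Fintype.card Y))
        * ∑ _x : X, 1 / ((Fintype.card X : ℝ) * Fintype.card Y) := by
  have hX : (0 : ℝ) < Fintype.card X := by exact_mod_cast Fintype.card_pos
  have hY : (0 : ℝ) < Fintype.card Y := by exact_mod_cast Fintype.card_pos
  simp only [sum_const, card_univ, nsmul_eq_mul]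
  field_simp

theorem tsallisMutualInfo_uniform [Nonempty X] [Nonempty Y] {q : ℝ} (hq : q ≠ 0) :
    tsallisMutualInfo q (fun _ : X × Y => 1 / ((Fintype.card X : ℝ) * Fintype.card Y))
      = fBound q (Fintype.card X) (Fintype.card Y) := by
  rw [tsallisMutualInfo_eq hq (fun _ => by positivity) sum_uniform,
    mutualInfoPowerSum_uniform q zero_le_one, one_rpow, one_mul, fBound_eq]

noncomputable def condUniform (w : Z → ℝ) : X × Y × Z → ℝ :=
  fun t => w t.2.2 / (Fintype.card X * Fintype.card Y)

lemma condUniform_nonneg {w : Z → ℝ} (hw : ∀ z, 0 ≤ w z) (t : X × Y × Z) :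
    0 ≤ condUniform w t :=
  div_nonneg (hw _) (by positivity)

lemma sum_condUniform [Nonempty X] [Nonempty Y] [Fintype Z] (w : Z → ℝ) :
    ∑ t : X × Y × Z, condUniform w t = ∑ z, w z := by
  have hX : (0 : ℝ) < Fintype.card X := by exact_mod_cast Fintype.card_pos
  have hY : (0 : ℝ) < Fintype.card Y := by exact_mod_cast Fintype.card_pos
  simp only [sum_prod_prod_eq_sum_sum_sum, condUniform, sum_const, card_univ, nsmul_eq_mul]
  exact sum_congr rfl fun z _ => by field_simp

lemma condUniform_condIndep (w : Z → ℝ) (x : X) (y : Y) (z : Z) :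
    condUniform w (x, y, z) * (∑ x' : X, ∑ y' : Y, condUniform w (x', y', z))
      = (∑ y' : Y, condUniform w (x, y', z)) * (∑ x' : X, condUniform w (x', y, z)) := by
  simp only [condUniform, sum_const, card_univ, nsmul_eq_mul]
  ring

theorem tsallisCondMutualInfo_condUniform [Nonempty X] [Nonempty Y] [Fintype Z] {q : ℝ}
    (hq : q ≠ 0) {w : Z → ℝ} (hw : ∀ z, 0 ≤ w z) :
    tsallisCondMutualInfo q (condUniform (X := X) (Y := Y) w)
      = (∑ z, w z ^ q) * fBound q (Fintype.card X) (Fintype.card Y) := by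
  rw [tsallisCondMutualInfo_eq hq (condUniform_nonneg hw), fBound_eq]
  simp only [condUniform, mutualInfoPowerSum_uniform q (hw _), ← sum_mul]
  ring

end

/-- For fixed finite alphabets and any `q > 1`, the maximum of the conditional
Tsallis mutual information `I_q(X:Y|Z)` over all distributions on `X × Y × Z`
satisfying the conditional independence `p_{XY|Z} = p_{X|Z}·p_{Y|Z}` is attained
and equals `f(q,d_X,d_Y)`, and so does the maximum of `I_q(X:Y)` over all
product distributions on `X × Y`. -/
theorem tsallis_cond_mutual_info_isGreatest
    {X Y Z : Type*} [Fintype X] [Fintype Y] [Fintype Z]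
    (hdX : 1 ≤ Fintype.card X) (hdY : 1 ≤ Fintype.card Y) (hdZ : 1 ≤ Fintype.card Z)
    (q : ℝ) (hq : 1 < q) :
    IsGreatest {r : ℝ | ∃ p : X × Y × Z → ℝ, (∀ t, 0 ≤ p t) ∧ (∑ t, p t = 1) ∧
        (∀ x y z, p (x, y, z) * (∑ x', ∑ y', p (x', y', z))
          = (∑ y', p (x, y', z)) * (∑ x', p (x', y, z))) ∧
        r = tsallisEnt q (fun w : X × Z => ∑ y, p (w.1, y, w.2))
            + tsallisEnt q (fun w : Y × Z => ∑ x, p (x, w.1, w.2))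
            - tsallisEnt q (fun z => ∑ x, ∑ y, p (x, y, z))
            - tsallisEnt q p}
      (fBound q (Fintype.card X) (Fintype.card Y))
    ∧ IsGreatest {r : ℝ | ∃ p : X × Y → ℝ, (∀ t, 0 ≤ p t) ∧ (∑ t, p t = 1) ∧
        (∀ x y, p (x, y) = (∑ y', p (x, y')) * (∑ x', p (x', y))) ∧
        r = tsallisEnt q (fun x => ∑ y, p (x, y))
            + tsallisEnt q (fun y => ∑ x, p (x, y))
            - tsallisEnt q p}
      (fBound q (Fintype.card X) (Fintype.card Y)) := by
  classical
  have : Nonempty X := Fintype.card_pos_iff.mp hdX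
  have : Nonempty Y := Fintype.card_pos_iff.mp hdY
  obtain ⟨z₀⟩ : Nonempty Z := Fintype.card_pos_iff.mp hdZ
  have hq0 : q ≠ 0 := by positivity
  set δ : Z → ℝ := fun z => if z = z₀ then 1 else 0
  have hδ : ∀ z, 0 ≤ δ z := fun z => by positivity
  have hδq : ∑ z, δ z ^ q = 1 := by simp [δ, apply_ite (· ^ q), zero_rpow hq0]
  have hδ1 : ∑ z, δ z = 1 := by simp [δ]
  refine ⟨⟨⟨condUniform δ, condUniform_nonneg hδ, (sum_condUniform δ).trans hδ1,
      condUniform_condIndep δ, ?_⟩, ?_⟩,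
    ⟨⟨_, fun _ => by positivity, sum_uniform, fun _ _ => uniform_eq_sum_mul_sum,
      (tsallisMutualInfo_uniform hq0).symm⟩, ?_⟩⟩
  · rw [← one_mul (fBound _ _ _), ← hδq]
    exact (tsallisCondMutualInfo_condUniform hq0 hδ).symm
  · rintro _ ⟨p, hp, hp1, hind, rfl⟩
    exact tsallisCondMutualInfo_le hq hp hp1 hind
  · rintro _ ⟨p, hp, hp1, hprod, rfl⟩
    exact tsallisMutualInfo_le hq hp hp1 hprod
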